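/- arXiv:1805.02345 — 6 statements merged into one kernel-verified Lean document; each statement's English description precedes it below -/
import Mathlib

section
/- Let k ≥ 1 and let P_{3k} be the path on 3k vertices. Then every minimum dominating set (γ-set) D of P_{3k} satisfies C_D(P_{3k}) = 2k, where C_D denotes the domination cover number of D. -/
open Finset

variable {α β : Type*}

/-- `D` is a dominating set of `G`: every vertex outside `D` has a neighbor in `D`. -/
def IsDomSet (G : SimpleGraph α) (D : Finset α) : Prop :=
  ∀ v ∉ D, ∃ u ∈ D, G.Adj u v

/-- The domination number `γ(G)`: minimum cardinality of a dominating set. -/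
noncomputable def domNum (G : SimpleGraph α) : ℕ :=
  sInf {n | ∃ D : Finset α, IsDomSet G D ∧ D.card = n}

/-- The degree of vertex `v` in `G`. -/
noncomputable def vdeg (G : SimpleGraph α) (v : α) : ℕ :=
  Nat.card (G.neighborSet v)

/-- The (domination) cover number of a set of vertices `A`: the sum of degrees. -/
noncomputable def coverNum (G : SimpleGraph α) (A : Finset α) : ℕ :=
  ∑ v ∈ A, vdeg G v

/-- `D` is a minimum dominating set (γ-set) of `G`. -/
def IsGammaSet (G : SimpleGraph α) (D : Finset α) : Prop :=
  IsDomSet G D ∧ D.card = domNum G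

/-- In a path graph every vertex has degree at most 2. -/
lemma vdeg_pathGraph_le_two (n : ℕ) (v : Fin n) :
    vdeg (SimpleGraph.pathGraph n) v ≤ 2 := by
  have h : (SimpleGraph.pathGraph n).neighborSet v ⊆
      {u : Fin n | u.val + 1 = v.val ∨ v.val + 1 = u.val} := by
    intro u hu
    have := (SimpleGraph.pathGraph_adj.mp hu.symm)
    simpa [Or.comm] using this
  calc vdeg (SimpleGraph.pathGraph n) v
      ≤ Nat.card {u : Fin n | u.val + 1 = v.val ∨ v.val + 1 = u.val} := by
        rw [vdeg, Nat.card_coe_set_eq, Nat.card_coe_set_eq]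
        exact Set.ncard_le_ncard h (Set.toFinite _)
    _ ≤ 2 := by
        have : Nat.card {u : Fin n | u.val + 1 = v.val ∨ v.val + 1 = u.val} ≤
            Nat.card (Fin 2) := by
          apply Nat.card_le_card_of_injective
            (fun u => if u.val.val + 1 = v.val then 0 else 1)
          · intro a b hab
            have ha := a.2; have hb := b.2
            simp only [Set.mem_setOf_eq] at ha hb
            ext
            by_cases h1 : a.val.val + 1 = v.val <;> by_cases h2 : b.val.val + 1 = v.val <;>
              simp [h1, h2] at hab ⊢ <;> omega
        simpa using this

/-- Counting lemma: the closed neighborhoods of a dominating set cover all vertices,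
so `n ≤ |D| + C_D(G)`. -/
lemma le_card_add_coverNum {n : ℕ} (G : SimpleGraph (Fin n)) (D : Finset (Fin n))
    (hdom : IsDomSet G D) : n ≤ D.card + coverNum G D := by
  classical
  letI : ∀ v, Fintype (G.neighborSet v) := fun v => Fintype.ofFinite _
  have hsub : (univ : Finset (Fin n)) ⊆ D.biUnion (fun d => insert d (G.neighborFinset d)) := by
    intro v _
    by_cases hv : v ∈ D
    · exact mem_biUnion.mpr ⟨v, hv, mem_insert_self _ _⟩
    · obtain ⟨u, hu, hadj⟩ := hdom v hv
      exact mem_biUnion.mpr ⟨u, hu, mem_insert_of_mem (G.mem_neighborFinset u v |>.mpr hadj)⟩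
  have h1 : n ≤ (D.biUnion (fun d => insert d (G.neighborFinset d))).card := by
    simpa using card_le_card hsub
  have h2 : (D.biUnion (fun d => insert d (G.neighborFinset d))).card ≤
      ∑ d ∈ D, (vdeg G d + 1) := by
    refine le_trans (card_biUnion_le) (Finset.sum_le_sum fun d _ => ?_)
    refine le_trans (card_insert_le _ _) ?_
    have : (G.neighborFinset d).card = vdeg G d := by
      rw [vdeg, Nat.card_eq_fintype_card, SimpleGraph.card_neighborSet_eq_degree,
        SimpleGraph.card_neighborFinset_eq_degree]
    omega
  rw [Finset.sum_add_distrib, Finset.sum_const, smul_eq_mul, mul_one] at h2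
  calc n ≤ _ := h1
    _ ≤ _ := h2
    _ = D.card + coverNum G D := by rw [coverNum, Nat.add_comm]

/-- The path `P_{3k}` has a dominating set of size `k`. -/
lemma exists_domSet_pathGraph (k : ℕ) : ∃ D : Finset (Fin (3*k)),
    IsDomSet (SimpleGraph.pathGraph (3*k)) D ∧ D.card = k := by
  refine ⟨(univ : Finset (Fin k)).image (fun i => ⟨3*i.val+1, by omega⟩), ?_, ?_⟩
  · intro v hv
    simp only [mem_image, mem_univ, true_and, not_exists] at hv
    have hq : v.val / 3 < k := Nat.div_lt_of_lt_mul (by omega)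
    refine ⟨⟨3*(v.val/3)+1, by omega⟩, ?_, ?_⟩
    · exact mem_image.mpr ⟨⟨v.val/3, hq⟩, mem_univ _, rfl⟩
    · rw [SimpleGraph.pathGraph_adj]
      have := hv ⟨v.val/3, hq⟩
      have h3 := Nat.div_add_mod v.val 3
      have hm : v.val % 3 < 3 := Nat.mod_lt _ (by omega)
      simp only [Fin.ext_iff] at this ⊢
      omega
  · rw [card_image_of_injective _ (fun a b h => by
      simp only [Fin.mk.injEq] at h; exact Fin.ext (by omega)), card_univ, Fintype.card_fin]

/-- Every minimum dominating set `D` of the path `P_{3k}` (`k ≥ 1`) has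
domination cover number `C_D(P_{3k}) = 2k`. -/
theorem gammaSet_pathGraph_three_mul_coverNum (k : ℕ) (hk : 1 ≤ k)
    (D : Finset (Fin (3 * k)))
    (hdom : IsDomSet (SimpleGraph.pathGraph (3 * k)) D)
    (hcard : D.card = domNum (SimpleGraph.pathGraph (3 * k))) :
    coverNum (SimpleGraph.pathGraph (3 * k)) D = 2 * k := by
  obtain ⟨D₀, hD₀dom, hD₀card⟩ := exists_domSet_pathGraph k
  have hle : domNum (SimpleGraph.pathGraph (3 * k)) ≤ k :=
    Nat.sInf_le ⟨D₀, hD₀dom, hD₀card⟩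
  have hDk : D.card ≤ k := hcard ▸ hle
  have hcount : 3 * k ≤ D.card + coverNum (SimpleGraph.pathGraph (3 * k)) D :=
    le_card_add_coverNum _ D hdom
  have hcov : coverNum (SimpleGraph.pathGraph (3 * k)) D ≤ 2 * D.card := by
    rw [coverNum]
    calc ∑ v ∈ D, vdeg (SimpleGraph.pathGraph (3 * k)) v ≤ ∑ _v ∈ D, 2 :=
          Finset.sum_le_sum fun v _ => vdeg_pathGraph_le_two _ v
      _ = 2 * D.card := by rw [Finset.sum_const, smul_eq_mul, Nat.mul_comm]
  omega
end

section
/- Let k ≥ 1 and let P_{3k+1} be the path on 3k+1 vertices. Then every minimum dominating set (γ-set) D of P_{3k+1} satisfies 2k ≤ C_D(P_{3k+1}) ≤ 2k+2, where C_D denotes the domination cover number of D. -/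
/-!
A vertex of `P_n` dominates at most three vertices, while the vertices `1, 4, 7, …` (the last one
moved to `n - 1` if necessary) dominate `P_n`; hence `γ(P_n) = ⌈n / 3⌉`, and a γ-set of `P_{3k+1}`
has `k + 1` vertices. Every vertex of a path has degree at most 2, and only the two endpoints have
smaller degree, namely 1 (for `n ≥ 2`). So the cover number of such a set lies between
`2(k + 1) - 2` and `2(k + 1)`.
-/

open Finset

variable {α β : Type*}

open SimpleGraph

lemma vdeg_eq_degree (G : SimpleGraph α) (v : α) [Fintype (G.neighborSet v)] :
    vdeg G v = G.degree v := by
  rw [vdeg, Nat.card_eq_fintype_card, card_neighborSet_eq_degree]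

lemma isDomSet_univ [Fintype α] (G : SimpleGraph α) : IsDomSet G univ :=
  fun v hv => absurd (mem_univ v) hv

lemma domNum_le_card {G : SimpleGraph α} {D : Finset α} (hD : IsDomSet G D) :
    domNum G ≤ D.card :=
  Nat.sInf_le ⟨D, hD, rfl⟩

lemma exists_isDomSet_card_eq_domNum [Fintype α] (G : SimpleGraph α) :
    ∃ D, IsDomSet G D ∧ D.card = domNum G :=
  Nat.sInf_mem (s := {n | ∃ D : Finset α, IsDomSet G D ∧ D.card = n})
    ⟨_, univ, isDomSet_univ G, rfl⟩

lemma IsDomSet.card_le_maxDegree_add_one_mul [Fintype α] {G : SimpleGraph α} [DecidableRel G.Adj]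
    {D : Finset α} (hD : IsDomSet G D) : Fintype.card α ≤ (G.maxDegree + 1) * D.card := by
  classical
  have hcover : (univ : Finset α) ⊆ D.biUnion fun d => insert d (G.neighborFinset d) := by
    intro v _
    rw [mem_biUnion]
    by_cases hv : v ∈ D
    · exact ⟨v, hv, mem_insert_self v _⟩
    · obtain ⟨u, hu, huv⟩ := hD v hv
      exact ⟨u, hu, mem_insert_of_mem ((mem_neighborFinset G u v).mpr huv)⟩
  calc Fintype.card α = (univ : Finset α).card := card_univ.symm
    _ ≤ (D.biUnion fun d => insert d (G.neighborFinset d)).card := card_le_card hcover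
    _ ≤ ∑ d ∈ D, (insert d (G.neighborFinset d)).card := card_biUnion_le
    _ ≤ ∑ _d ∈ D, (G.maxDegree + 1) := sum_le_sum fun d _ => by
      grw [card_insert_le, card_neighborFinset_eq_degree, degree_le_maxDegree]
    _ = (G.maxDegree + 1) * D.card := by rw [sum_const, smul_eq_mul, mul_comm]

lemma ncard_setOf_val_add_one_eq {n : ℕ} (v : Fin n) :
    {u : Fin n | u.val + 1 = v.val}.ncard = if v.val = 0 then 0 else 1 := by
  split_ifs with hv
  · simp [hv]
  · rw [Set.ncard_eq_one]
    exact ⟨⟨v.val - 1, by omega⟩, by ext u; simp [Fin.ext_iff]; omega⟩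

lemma ncard_setOf_eq_val_add_one {n : ℕ} (v : Fin n) :
    {u : Fin n | v.val + 1 = u.val}.ncard = if v.val + 1 = n then 0 else 1 := by
  split_ifs with hv
  · rw [Set.ncard_eq_zero]
    ext u; simp; omega
  · rw [Set.ncard_eq_one]
    exact ⟨⟨v.val + 1, by omega⟩, by ext u; simp [Fin.ext_iff]; omega⟩

lemma vdeg_pathGraph_add_ite_add_ite {n : ℕ} (v : Fin n) :
    vdeg (pathGraph n) v + (if v.val = 0 then 1 else 0) + (if v.val + 1 = n then 1 else 0) = 2 := by
  have hnbr : (pathGraph n).neighborSet v =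
      {u | u.val + 1 = v.val} ∪ {u | v.val + 1 = u.val} := by
    ext u; simp [pathGraph_adj, or_comm]
  have hdisj : Disjoint {u : Fin n | u.val + 1 = v.val} {u | v.val + 1 = u.val} :=
    Set.disjoint_left.mpr fun u h1 h2 => by simp only [Set.mem_ofPred_eq] at h1 h2; omega
  rw [vdeg, Nat.card_coe_set_eq, hnbr, Set.ncard_union_eq hdisj, ncard_setOf_val_add_one_eq,
    ncard_setOf_eq_val_add_one]
  split_ifs <;> rfl

lemma coverNum_pathGraph_le {n : ℕ} (D : Finset (Fin n)) :
    coverNum (pathGraph n) D ≤ 2 * D.card := by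
  calc coverNum (pathGraph n) D ≤ ∑ _v ∈ D, 2 := sum_le_sum fun v _ => by
        have := vdeg_pathGraph_add_ite_add_ite v; omega
    _ = 2 * D.card := by rw [sum_const, smul_eq_mul, mul_comm]

lemma card_filter_val_eq_le_one {n : ℕ} (D : Finset (Fin n)) (m : ℕ) :
    (D.filter fun v => v.val = m).card ≤ 1 :=
  card_le_one.mpr fun a ha b hb => Fin.ext <| by simp only [mem_filter] at ha hb; omega

lemma two_mul_card_le_coverNum_pathGraph_add_two {n : ℕ} (D : Finset (Fin n)) :
    2 * D.card ≤ coverNum (pathGraph n) D + 2 := by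
  have hsum := sum_congr rfl fun v (_ : v ∈ D) => vdeg_pathGraph_add_ite_add_ite v
  rw [sum_add_distrib, sum_add_distrib, ← card_filter, ← card_filter, sum_const, smul_eq_mul]
    at hsum
  have h0 := card_filter_val_eq_le_one D 0
  have hlast := card_filter_val_eq_le_one D (n - 1)
  have hlast_eq : (D.filter fun v => v.val + 1 = n) = D.filter fun v => v.val = n - 1 :=
    filter_congr fun v _ => by omega
  rw [hlast_eq] at hsum
  rw [coverNum]
  omega

lemma exists_isDomSet_pathGraph_card_le (n : ℕ) :
    ∃ D : Finset (Fin n), IsDomSet (pathGraph n) D ∧ D.card ≤ (n + 2) / 3 := by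
  let center (i : Fin ((n + 2) / 3)) : Fin n := ⟨min (3 * i.val + 1) (n - 1), by omega⟩
  refine ⟨univ.image center, fun v hv => ?_, card_image_le.trans_eq (by simp)⟩
  let u : Fin n := center ⟨v.val / 3, by omega⟩
  have hu : u ∈ univ.image center := mem_image_of_mem _ (mem_univ _)
  have hadj : u = v ∨ (pathGraph n).Adj u v := by
    simp only [u, center, pathGraph_adj, Fin.ext_iff]; omega
  exact ⟨u, hu, hadj.resolve_left fun h => hv (h ▸ hu)⟩

lemma domNum_pathGraph (n : ℕ) : domNum (pathGraph n) = (n + 2) / 3 := by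
  classical
  obtain ⟨D, hD, hDcard⟩ := exists_isDomSet_pathGraph_card_le n
  obtain ⟨E, hE, hEcard⟩ := exists_isDomSet_card_eq_domNum (pathGraph n)
  have hmax : (pathGraph n).maxDegree ≤ 2 := maxDegree_le_of_forall_degree_le _ _ fun v => by
    have := vdeg_pathGraph_add_ite_add_ite v
    rw [vdeg_eq_degree] at this
    omega
  have hcount := hE.card_le_maxDegree_add_one_mul
  rw [Fintype.card_fin] at hcount
  have hupper := domNum_le_card hD
  have hlower : n ≤ 3 * E.card := hcount.trans (Nat.mul_le_mul_right _ (by omega))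
  omega

theorem gammaSet_pathGraph_three_mul_add_one_coverNum_general (k : ℕ)
    (D : Finset (Fin (3 * k + 1)))
    (hcard : D.card = domNum (SimpleGraph.pathGraph (3 * k + 1))) :
    2 * k ≤ coverNum (SimpleGraph.pathGraph (3 * k + 1)) D ∧
      coverNum (SimpleGraph.pathGraph (3 * k + 1)) D ≤ 2 * k + 2 := by
  have hD : D.card = k + 1 := by rw [hcard, domNum_pathGraph]; omega
  have hlower := two_mul_card_le_coverNum_pathGraph_add_two D
  have hupper := coverNum_pathGraph_le D
  omega

/-- Every minimum dominating set `D` of the path `P_{3k+1}` (`k ≥ 1`) satisfies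
`2k ≤ C_D(P_{3k+1}) ≤ 2k + 2`. -/
theorem gammaSet_pathGraph_three_mul_add_one_coverNum (k : ℕ) (hk : 1 ≤ k)
    (D : Finset (Fin (3 * k + 1)))
    (hdom : IsDomSet (SimpleGraph.pathGraph (3 * k + 1)) D)
    (hcard : D.card = domNum (SimpleGraph.pathGraph (3 * k + 1))) :
    2 * k ≤ coverNum (SimpleGraph.pathGraph (3 * k + 1)) D ∧
      coverNum (SimpleGraph.pathGraph (3 * k + 1)) D ≤ 2 * k + 2 :=
  gammaSet_pathGraph_three_mul_add_one_coverNum_general k D hcard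
end

section
/- Let G be a finite simple graph on n vertices with no isolated vertices, and let D be a minimum dominating set (γ-set) of G. Then ⌈n/2⌉ ≤ C_D(G) ≤ ⌈n/2⌉², where C_D denotes the domination cover number of D. -/
open Finset

variable {α β : Type*}

lemma mul_le_sq_aux {a b m : ℕ} (h : a + b ≤ 2 * m) : a * b ≤ m * m := by
  rcases le_total a b with hab | hab
  · have ha : a ≤ m := by omega
    obtain ⟨d, rfl⟩ := Nat.le.dest ha
    have hb : b ≤ a + 2 * d := by omega
    nlinarith
  · have hb : b ≤ m := by omega
    obtain ⟨d, rfl⟩ := Nat.le.dest hb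
    have ha : a ≤ b + 2 * d := by omega
    nlinarith

/-- For a finite graph `G` on `n` vertices with no isolated vertices, every
minimum dominating set `D` satisfies `⌈n/2⌉ ≤ C_D(G) ≤ ⌈n/2⌉²`. -/
theorem gammaSet_coverNum_bounds [Fintype α] (G : SimpleGraph α)
    (hiso : ∀ v : α, ∃ u, G.Adj v u)
    (D : Finset α) (hD : IsGammaSet G D) :
    (Fintype.card α + 1) / 2 ≤ coverNum G D ∧
      coverNum G D ≤ ((Fintype.card α + 1) / 2) ^ 2 := by
  classical
  obtain ⟨hdom, hcard⟩ := hD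
  set n := Fintype.card α with hn
  have hvdeg : ∀ v, vdeg G v = G.degree v := by
    intro v
    rw [vdeg, Nat.card_eq_fintype_card, SimpleGraph.card_neighborSet_eq_degree]
  -- C_D ≥ |D|
  have h1 : D.card ≤ coverNum G D := by
    rw [coverNum, Finset.card_eq_sum_ones D]
    apply Finset.sum_le_sum
    intro v _
    rw [hvdeg]
    obtain ⟨u, hu⟩ := hiso v
    have hm : u ∈ G.neighborFinset v := by
      rw [SimpleGraph.mem_neighborFinset]; exact hu
    exact Finset.card_pos.mpr ⟨u, hm⟩
  -- C_D ≥ n - |D|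
  have h2 : n - D.card ≤ coverNum G D := by
    have hsub : univ \ D ⊆ D.biUnion (fun u => G.neighborFinset u) := by
      intro v hv
      simp only [mem_sdiff, mem_univ, true_and] at hv
      obtain ⟨u, hu, hadj⟩ := hdom v hv
      simp only [mem_biUnion, SimpleGraph.mem_neighborFinset]
      exact ⟨u, hu, hadj⟩
    calc n - D.card = (univ \ D).card := by
          rw [card_sdiff_of_subset (subset_univ _), card_univ]
      _ ≤ (D.biUnion (fun u => G.neighborFinset u)).card := card_le_card hsub
      _ ≤ ∑ u ∈ D, (G.neighborFinset u).card := card_biUnion_le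
      _ = coverNum G D := by
          simp only [coverNum]
          refine Finset.sum_congr rfl fun v _ => ?_
          rw [hvdeg]; rfl
  have hDn : D.card ≤ n := by
    simpa using card_le_card (subset_univ D)
  -- degree bound: deg v + γ ≤ n
  have hdeg : ∀ v, G.degree v + D.card ≤ n := by
    intro v
    have hS : IsDomSet G (univ \ G.neighborFinset v) := by
      intro u hu
      simp only [mem_sdiff, mem_univ, true_and, not_not,
        SimpleGraph.mem_neighborFinset] at hu
      refine ⟨v, ?_, hu⟩
      simp [SimpleGraph.mem_neighborFinset]
    have hle : domNum G ≤ (univ \ G.neighborFinset v).card :=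
      Nat.sInf_le ⟨_, hS, rfl⟩
    have hc : (univ \ G.neighborFinset v).card = n - G.degree v := by
      rw [card_sdiff_of_subset (subset_univ _), card_univ]; rfl
    have hdn : G.degree v ≤ n := by
      simpa using card_le_card (subset_univ (G.neighborFinset v))
    omega
  -- C_D ≤ |D| * (n - |D|)
  have h3 : coverNum G D ≤ D.card * (n - D.card) := by
    have : ∑ v ∈ D, vdeg G v ≤ D.card * (n - D.card) := by
      have := Finset.sum_le_card_nsmul D (fun v => vdeg G v) (n - D.card)
        (fun v _ => by show vdeg G v ≤ n - D.card; rw [hvdeg]; have := hdeg v; omega)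
      simpa using this
    simpa [coverNum] using this
  constructor
  · omega
  · have key : D.card * (n - D.card) ≤ ((n + 1) / 2) * ((n + 1) / 2) :=
      mul_le_sq_aux (by omega)
    calc coverNum G D ≤ D.card * (n - D.card) := h3
      _ ≤ ((n + 1) / 2) * ((n + 1) / 2) := key
      _ = ((n + 1) / 2) ^ 2 := (sq _).symm
end

section
/- Let p ≥ 1 and let H be the corona of K_p, a graph on n = 2p vertices. Then γ(H) = p; moreover, the set of p pendant vertices is a γ-set D₁ of H with C_{D₁}(H) = p = ⌈n/2⌉, and the set of p vertices of the complete graph K_p is a γ-set D₂ of H with C_{D₂}(H) = p² = ⌈n/2⌉². In particular, both the lower bound ⌈n/2⌉ and the upper bound ⌈n/2⌉² on the domination cover number of a γ-set are attained. -/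
open Finset

variable {α β : Type*}

/-- The corona of the complete graph `K_p`: take `K_p` on the left copy of
`Fin p` and attach to its `i`-th vertex a pendant vertex `Sum.inr i`. -/
def coronaK (p : ℕ) : SimpleGraph (Fin p ⊕ Fin p) :=
  SimpleGraph.fromRel (fun a b => match a, b with
    | Sum.inl i, Sum.inl j => i ≠ j
    | Sum.inl i, Sum.inr j => i = j
    | _, _ => False)


lemma coronaK_adj_ll (p : ℕ) (i j : Fin p) :
    (coronaK p).Adj (Sum.inl i) (Sum.inl j) ↔ i ≠ j := by
  simp [coronaK, SimpleGraph.fromRel_adj]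
  tauto

lemma coronaK_adj_lr (p : ℕ) (i j : Fin p) :
    (coronaK p).Adj (Sum.inl i) (Sum.inr j) ↔ i = j := by
  simp [coronaK, SimpleGraph.fromRel_adj]

lemma coronaK_adj_rl (p : ℕ) (i j : Fin p) :
    (coronaK p).Adj (Sum.inr i) (Sum.inl j) ↔ j = i := by
  simp [coronaK, SimpleGraph.fromRel_adj]

lemma coronaK_adj_rr (p : ℕ) (i j : Fin p) :
    ¬ (coronaK p).Adj (Sum.inr i) (Sum.inr j) := by
  simp [coronaK, SimpleGraph.fromRel_adj]

lemma vdeg_inr (p : ℕ) (i : Fin p) : vdeg (coronaK p) (Sum.inr i) = 1 := by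
  have h : (coronaK p).neighborSet (Sum.inr i) = {Sum.inl i} := by
    ext v
    cases v with
    | inl j => simp [SimpleGraph.neighborSet, coronaK_adj_rl, eq_comm]
    | inr j => simp [SimpleGraph.neighborSet, coronaK_adj_rr]
  rw [vdeg, h]; simp

lemma vdeg_inl (p : ℕ) (hp : 1 ≤ p) (i : Fin p) : vdeg (coronaK p) (Sum.inl i) = p := by
  have h : (coronaK p).neighborSet (Sum.inl i) =
      ↑(((Finset.univ.erase i).image Sum.inl ∪ {Sum.inr i}) : Finset (Fin p ⊕ Fin p)) := by
    ext v
    cases v with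
    | inl j => simp [SimpleGraph.neighborSet, coronaK_adj_ll, ne_comm]
    | inr j => simp [SimpleGraph.neighborSet, coronaK_adj_lr, eq_comm]
  rw [vdeg, h, Nat.card_coe_set_eq, Set.ncard_coe_finset,
    Finset.card_union_of_disjoint (by simp),
    Finset.card_image_of_injective _ Sum.inl_injective]
  simp; omega

lemma dom_pendant (p : ℕ) : IsDomSet (coronaK p) (Finset.univ.image Sum.inr) := by
  intro v hv
  cases v with
  | inl i => exact ⟨Sum.inr i, by simp, by rw [coronaK_adj_rl]⟩
  | inr i => exact absurd (by simp) hv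

lemma dom_clique (p : ℕ) : IsDomSet (coronaK p) (Finset.univ.image Sum.inl) := by
  intro v hv
  cases v with
  | inl i => exact absurd (by simp) hv
  | inr i => exact ⟨Sum.inl i, by simp, by rw [coronaK_adj_lr]⟩

lemma dom_lower (p : ℕ) (D : Finset (Fin p ⊕ Fin p)) (hD : IsDomSet (coronaK p) D) :
    p ≤ D.card := by
  have hsub : (Finset.univ : Finset (Fin p)) ⊆ D.image (Sum.elim id id) := by
    intro i _
    by_cases h : Sum.inr i ∈ D
    · exact Finset.mem_image.2 ⟨Sum.inr i, h, rfl⟩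
    · obtain ⟨u, hu, hadj⟩ := hD _ h
      cases u with
      | inl j =>
        rw [coronaK_adj_lr] at hadj
        exact Finset.mem_image.2 ⟨Sum.inl j, hu, hadj⟩
      | inr j => exact absurd hadj (coronaK_adj_rr p j i)
  calc p = (Finset.univ : Finset (Fin p)).card := by simp
    _ ≤ (D.image (Sum.elim id id)).card := Finset.card_le_card hsub
    _ ≤ D.card := Finset.card_image_le

lemma card_pendant (p : ℕ) : (Finset.univ.image (Sum.inr : Fin p → Fin p ⊕ Fin p)).card = p := by
  rw [Finset.card_image_of_injective _ Sum.inr_injective]; simp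

lemma card_clique (p : ℕ) : (Finset.univ.image (Sum.inl : Fin p → Fin p ⊕ Fin p)).card = p := by
  rw [Finset.card_image_of_injective _ Sum.inl_injective]; simp

lemma domNum_coronaK (p : ℕ) : domNum (coronaK p) = p := by
  apply le_antisymm
  · exact Nat.sInf_le ⟨_, dom_pendant p, card_pendant p⟩
  · exact le_csInf ⟨p, _, dom_pendant p, card_pendant p⟩
      (fun n ⟨D, hD, hc⟩ => hc ▸ dom_lower p D hD)

/-- In the corona `H` of `K_p` (a graph on `n = 2p` vertices, `p ≥ 1`), one has
`γ(H) = p`; the set of the `p` pendant vertices is a γ-set with cover number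
`p = ⌈n/2⌉`, and the set of the `p` clique vertices is a γ-set with cover number
`p² = ⌈n/2⌉²`. Hence both bounds `⌈n/2⌉` and `⌈n/2⌉²` are attained. -/
theorem coronaK_coverNum_bounds_sharp (p : ℕ) (hp : 1 ≤ p) :
    domNum (coronaK p) = p ∧
    (IsGammaSet (coronaK p) (Finset.univ.image Sum.inr) ∧
      coverNum (coronaK p) (Finset.univ.image Sum.inr) = p) ∧
    (IsGammaSet (coronaK p) (Finset.univ.image Sum.inl) ∧
      coverNum (coronaK p) (Finset.univ.image Sum.inl) = p ^ 2) ∧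
    p = (Fintype.card (Fin p ⊕ Fin p) + 1) / 2 ∧
    p ^ 2 = ((Fintype.card (Fin p ⊕ Fin p) + 1) / 2) ^ 2 := by
  refine ⟨domNum_coronaK p, ⟨⟨dom_pendant p, by rw [card_pendant, domNum_coronaK]⟩, ?_⟩,
    ⟨⟨dom_clique p, by rw [card_clique, domNum_coronaK]⟩, ?_⟩, ?_, ?_⟩
  · rw [coverNum, Finset.sum_image (fun a _ b _ h => Sum.inr_injective h)]
    simp [vdeg_inr]
  · rw [coverNum, Finset.sum_image (fun a _ b _ h => Sum.inl_injective h)]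
    simp [vdeg_inl p hp]; ring
  · simp; omega
  · simp; ring_nf; omega
end

section
/- Let G be a finite simple graph with no isolated vertices such that γ_t(G) = 2γ(G). Then every minimum dominating set (γ-set) S of G is an independent set, i.e., no two vertices of S are adjacent in G. -/
open Finset

variable {α β : Type*}

/-- `S` is a total dominating set of `G`: every vertex has a neighbor in `S`. -/
def IsTotalDomSet (G : SimpleGraph α) (S : Finset α) : Prop :=
  ∀ v, ∃ u ∈ S, G.Adj u v

/-- The total domination number `γ_t(G)`. -/
noncomputable def totalDomNum (G : SimpleGraph α) : ℕ :=
  sInf {n | ∃ S : Finset α, IsTotalDomSet G S ∧ S.card = n}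

/-- If `G` has no isolated vertices and `γ_t(G) = 2γ(G)`, then every minimum
dominating set `S` of `G` is an independent set. -/
theorem gammaSet_independent_of_totalDomNum_eq [Fintype α] (G : SimpleGraph α)
    (hG : ∀ v : α, ∃ u, G.Adj v u) (ht : totalDomNum G = 2 * domNum G)
    (S : Finset α) (hS : IsGammaSet G S) :
    ∀ u ∈ S, ∀ w ∈ S, ¬ G.Adj u w := by
  classical
  intro u hu w hw huw
  have hne : u ≠ w := G.ne_of_adj huw
  choose f hf using hG
  set T : Finset α := S ∪ (S \ {u, w}).image f with hT
  have hTD : IsTotalDomSet G T := by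
    intro v
    by_cases hv : v ∈ S
    · by_cases hvu : v = u
      · exact ⟨w, mem_union_left _ hw, hvu ▸ huw.symm⟩
      · by_cases hvw : v = w
        · exact ⟨u, mem_union_left _ hu, hvw ▸ huw⟩
        · refine ⟨f v, mem_union_right _ ?_, (hf v).symm⟩
          exact mem_image_of_mem f (mem_sdiff.mpr ⟨hv, by simp [hvu, hvw]⟩)
    · obtain ⟨x, hx, hadj⟩ := hS.1 v hv
      exact ⟨x, mem_union_left _ hx, hadj⟩
  have hle : totalDomNum G ≤ T.card := Nat.sInf_le ⟨T, hTD, rfl⟩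
  have hcard : T.card ≤ S.card + (S.card - 2) := by
    calc T.card ≤ S.card + ((S \ {u, w}).image f).card := card_union_le _ _
    _ ≤ S.card + (S \ {u, w}).card := by
        exact Nat.add_le_add_left (card_image_le) _
    _ = S.card + (S.card - 2) := by
        congr 1
        rw [card_sdiff_of_subset (by intro x hx; simp at hx; rcases hx with rfl | rfl <;> assumption)]
        simp [card_insert_of_notMem, hne]
  have hS2 : 2 ≤ S.card := by
    have : ({u, w} : Finset α).card ≤ S.card := by
      apply card_le_card; intro x hx; simp at hx; rcases hx with rfl | rfl <;> assumption
    simpa [card_insert_of_notMem, hne] using this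
  rw [ht, ← hS.2] at hle
  omega
end

section
/- Let G and H be finite simple graphs, let S be a minimum dominating set (γ-set) of G, and let h ∈ V(H) be a vertex adjacent to every other vertex of H. Then the domination cover number of the dominating set D = S × {h} of the lexicographic product G∘H satisfies C_D(G∘H) = C_S(G) · |V(H)| + γ(G) · (|V(H)| − 1). -/
/-! In `G ∘ H` the neighbourhood of `(v, b)` is the disjoint union of `N_G(v) × V(H)` and
`{v} × N_H(b)`, so `deg (v, b) = deg_G v · |V(H)| + deg_H b`; summing over `S × {h}` and using
`deg_H h = |V(H)| - 1` for the universal vertex `h` gives the formula. -/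

open Finset

variable {α β : Type*}

def lexProd (G : SimpleGraph α) (H : SimpleGraph β) : SimpleGraph (α × β) where
  Adj a b := G.Adj a.1 b.1 ∨ (a.1 = b.1 ∧ H.Adj a.2 b.2)
  symm := by
    constructor
    rintro a b (h | ⟨h1, h2⟩)
    · exact Or.inl h.symm
    · exact Or.inr ⟨h1.symm, h2.symm⟩
  loopless := by
    constructor
    rintro a (h | ⟨_, h⟩)
    · exact G.loopless.irrefl _ h
    · exact H.loopless.irrefl _ h

lemma vdeg_eq_ncard (G : SimpleGraph α) (v : α) : vdeg G v = (G.neighborSet v).ncard :=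
  (Set.ncard_def _).symm

lemma vdeg_of_isUniversal [Finite α] {G : SimpleGraph α} {v : α} (hv : G.IsUniversal v) :
    vdeg G v = Nat.card α - 1 := by
  rw [vdeg_eq_ncard, SimpleGraph.neighborSet_eq_compl_singleton.mpr hv, Set.ncard_compl,
    Set.ncard_singleton]

lemma lexProd_neighborSet (G : SimpleGraph α) (H : SimpleGraph β) (v : α) (b : β) :
    (lexProd G H).neighborSet (v, b) =
      G.neighborSet v ×ˢ Set.univ ∪ {v} ×ˢ H.neighborSet b := by
  ext ⟨w, c⟩
  simp [lexProd, eq_comm]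

lemma vdeg_lexProd [Finite α] [Finite β] (G : SimpleGraph α) (H : SimpleGraph β) (v : α) (b : β) :
    vdeg (lexProd G H) (v, b) = vdeg G v * Nat.card β + vdeg H b := by
  have hdisj : Disjoint (G.neighborSet v ×ˢ (Set.univ : Set β)) ({v} ×ˢ H.neighborSet b) :=
    Set.disjoint_prod.mpr <| .inl <| Set.disjoint_singleton_right.mpr G.notMem_neighborSet_self
  rw [vdeg_eq_ncard, lexProd_neighborSet, Set.ncard_union_eq hdisj, Set.ncard_prod,
    Set.ncard_prod, Set.ncard_univ, Set.ncard_singleton, one_mul, vdeg_eq_ncard, vdeg_eq_ncard]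

lemma coverNum_lexProd_prod_singleton [Finite α] [Finite β] (G : SimpleGraph α)
    (H : SimpleGraph β) (S : Finset α) (b : β) :
    coverNum (lexProd G H) (S ×ˢ {b}) = coverNum G S * Nat.card β + #S * vdeg H b := by
  simp only [coverNum, sum_product, sum_singleton, vdeg_lexProd]
  rw [sum_add_distrib, ← sum_mul, sum_const, smul_eq_mul]

/-- If `S` is a minimum dominating set of `G` and `h ∈ V(H)` is adjacent to all
other vertices of `H`, then the dominating set `D = S × {h}` of `G ∘ H` has
cover number `C_D(G ∘ H) = C_S(G) · |V(H)| + γ(G) · (|V(H)| − 1)`. -/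
theorem lexProd_coverNum_of_universal_vertex [Fintype α] [Fintype β]
    (G : SimpleGraph α) (H : SimpleGraph β)
    (S : Finset α) (hS : IsGammaSet G S)
    (h : β) (hh : ∀ x : β, x ≠ h → H.Adj h x) :
    coverNum (lexProd G H) (S ×ˢ {h}) =
      coverNum G S * Fintype.card β + domNum G * (Fintype.card β - 1) := by
  rw [coverNum_lexProd_prod_singleton, vdeg_of_isUniversal fun x hx ↦ hh x hx.symm, hS.2,
    Nat.card_eq_fintype_card]
end
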